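/- Let H be a separable real Hilbert space, ε > 0, and let (p_t)_{t > 0} be a family of Markov kernels on H such that p_{s+t}*ρ = p_t*(p_s*ρ) for all s, t > 0 and all probability measures ρ, each p_t(x,·) has finite second moment, and W₂(p_t(x,·), p_t(y,·)) ≤ e^{−εt/2}‖x − y‖ for all x, y ∈ H and t > 0. Suppose ρ and π are Borel probability measures on H with finite second moments such that W₂(p_k*ρ, π) → 0 as k → ∞ along the natural numbers. Then π is invariant: p_t*π = π for every t > 0. -/

import Mathlib

open MeasureTheory ProbabilityTheory ENNReal

/-- A coupling of two measures: a measure on the product whose marginals are the given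
measures. -/
def IsCoupling {α : Type*} [MeasurableSpace α] (G : Measure (α × α)) (ρ ρ' : Measure α) :
    Prop :=
  Measure.map Prod.fst G = ρ ∧ Measure.map Prod.snd G = ρ'

/-- The Wasserstein-`p` distance `W_p(ρ,ρ') = (inf_G ∫ ‖x-y‖^p dG)^{1/p}`, infimum over
all couplings `G` of `ρ` and `ρ'`, with values in `[0,∞]`. -/
noncomputable def wassersteinDist {α : Type*} [NormedAddCommGroup α] [MeasurableSpace α]
    (p : ℝ) (ρ ρ' : Measure α) : ℝ≥0∞ :=
  (⨅ (G : Measure (α × α)) (_ : IsCoupling G ρ ρ'),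
      ∫⁻ z, ENNReal.ofReal (‖z.1 - z.2‖ ^ p) ∂G) ^ (1 / p)

/-!
Bounded functions with `f x ≤ f y + K ‖x - y‖` determine a Borel probability measure, and their
integrals move by at most `K W₂(μ, ν)` between `μ` and `ν`. By the contraction, `x ↦ ∫ f dp_t(x)`
is again such a function, so `∫ f d(p_k*τ)` and `∫ f d(p_k*ρ)` differ by at most
`K e^{-εk/2}` times the first moments of `τ` and `ρ`; hence `∫ f d(p_k*τ) → ∫ f dπ` for every `τ`
with finite first moment. Taking `τ = p_t*π`, and the test function `∫ f dp_t` with `τ = π`, the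
Chapman–Kolmogorov relation makes the two sequences equal, whence `∫ f d(p_t*π) = ∫ f dπ`.
-/

open Filter Topology
open scoped NNReal

section Coupling

variable {α : Type*} [MeasurableSpace α]

lemma IsCoupling.isProbabilityMeasure {G : Measure (α × α)} {μ ν : Measure α}
    [IsProbabilityMeasure μ] (hG : IsCoupling G μ ν) : IsProbabilityMeasure G := by
  have h : Measure.map Prod.fst G Set.univ = 1 := by rw [hG.1]; exact measure_univ
  rw [Measure.map_apply measurable_fst MeasurableSet.univ, Set.preimage_univ] at h
  exact ⟨h⟩

lemma IsCoupling.swap {G : Measure (α × α)} {μ ν : Measure α} (hG : IsCoupling G μ ν) :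
    IsCoupling (G.map Prod.swap) ν μ := by
  constructor
  · rw [Measure.map_map measurable_fst measurable_swap]; exact hG.2
  · rw [Measure.map_map measurable_snd measurable_swap]; exact hG.1

lemma isCoupling_prod (μ ν : Measure α) [IsProbabilityMeasure μ] [IsProbabilityMeasure ν] :
    IsCoupling (μ.prod ν) μ ν := by
  constructor <;> simp

end Coupling

lemma wassersteinDist_comm {α : Type*} [NormedAddCommGroup α] [MeasurableSpace α]
    (p : ℝ) (μ ν : Measure α) : wassersteinDist p μ ν = wassersteinDist p ν μ := by
  have key : ∀ μ ν : Measure α,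
      (⨅ (G : Measure (α × α)) (_ : IsCoupling G ν μ), ∫⁻ z, ENNReal.ofReal (‖z.1 - z.2‖ ^ p) ∂G)
        ≤ ⨅ (G : Measure (α × α)) (_ : IsCoupling G μ ν),
          ∫⁻ z, ENNReal.ofReal (‖z.1 - z.2‖ ^ p) ∂G := by
    refine fun μ ν => le_iInf₂ fun G hG => iInf₂_le_of_le _ hG.swap ?_
    rw [show G.map Prod.swap = G.map MeasurableEquiv.prodComm from rfl, lintegral_map_equiv]
    exact (lintegral_congr fun z => by rw [norm_sub_rev]; rfl).le
  unfold wassersteinDist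
  rw [le_antisymm (key ν μ) (key μ ν)]

lemma lintegral_enorm_le_sqrt_lintegral_enorm_sq {Ω E : Type*} [MeasurableSpace Ω]
    [NormedAddCommGroup E] {μ : Measure Ω} [IsProbabilityMeasure μ] {g : Ω → E}
    (hg : AEStronglyMeasurable g μ) :
    ∫⁻ x, ‖g x‖ₑ ∂μ ≤ (∫⁻ x, ‖g x‖ₑ ^ 2 ∂μ) ^ (1 / 2 : ℝ) := by
  have h := eLpNorm_le_eLpNorm_of_exponent_le (p := 1) (q := 2) one_le_two hg
  simpa [eLpNorm_one_eq_lintegral_enorm,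
    eLpNorm_eq_lintegral_rpow_enorm_toReal two_ne_zero ofNat_ne_top] using h

lemma ofReal_norm_rpow_two {E : Type*} [NormedAddCommGroup E] (x : E) :
    ENNReal.ofReal (‖x‖ ^ (2 : ℝ)) = ‖x‖ₑ ^ 2 := by
  rw [Real.rpow_two, ENNReal.ofReal_pow (norm_nonneg _), ofReal_norm]

section Wasserstein

variable {α : Type*} [NormedAddCommGroup α] [MeasurableSpace α] [BorelSpace α]
  [SecondCountableTopology α] {μ ν : Measure α} [IsProbabilityMeasure μ]
  {f : α → ℝ≥0∞} {K : ℝ≥0}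

lemma lintegral_le_add_mul_of_isCoupling {G : Measure (α × α)} (hG : IsCoupling G μ ν)
    (hf : Measurable f) (hfK : ∀ x y, f x ≤ f y + K * edist x y) :
    ∫⁻ x, f x ∂μ ≤ ∫⁻ x, f x ∂ν +
      K * (∫⁻ z, ENNReal.ofReal (‖z.1 - z.2‖ ^ (2 : ℝ)) ∂G) ^ (1 / 2 : ℝ) := by
  have := hG.isProbabilityMeasure
  rw [← hG.1, ← hG.2, lintegral_map hf measurable_fst, lintegral_map hf measurable_snd]
  calc ∫⁻ z, f z.1 ∂G ≤ ∫⁻ z, f z.2 + K * edist z.1 z.2 ∂G := lintegral_mono fun z => hfK _ _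
    _ = ∫⁻ z, f z.2 ∂G + K * ∫⁻ z, edist z.1 z.2 ∂G := by
      rw [lintegral_add_right _ (measurable_edist.const_mul _),
        lintegral_const_mul _ measurable_edist]
    _ ≤ _ := by
      simp_rw [edist_eq_enorm_sub, ofReal_norm_rpow_two]
      gcongr
      exact lintegral_enorm_le_sqrt_lintegral_enorm_sq
        (measurable_fst.sub measurable_snd).aestronglyMeasurable

lemma lintegral_le_add_mul_wassersteinDist [IsProbabilityMeasure ν]
    (hfK : ∀ x y, f x ≤ f y + K * edist x y) :
    ∫⁻ x, f x ∂μ ≤ ∫⁻ x, f x ∂ν + K * wassersteinDist 2 μ ν := by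
  have hf := (continuous_of_le_add_edist K coe_ne_top hfK).measurable
  rcases eq_or_ne K 0 with rfl | hK
  · simpa using lintegral_le_add_mul_of_isCoupling (isCoupling_prod μ ν) hf hfK
  -- `φ` commutes with infima, so the bound for each coupling passes to the infimum.
  set φ : ℝ≥0∞ → ℝ≥0∞ := fun I => ∫⁻ x, f x ∂ν + K * I ^ (1 / 2 : ℝ)
  have hφ_mono : Monotone φ := fun a b hab => by dsimp only [φ]; gcongr
  have hφ_cont : Continuous φ :=
    continuous_const.add ((ENNReal.continuous_const_mul coe_ne_top).comp
      (ENNReal.continuous_rpow_const))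
  have hφ_top : φ ⊤ = ⊤ := by simp [φ, hK]
  change _ ≤ φ _
  rw [hφ_mono.map_iInf_of_continuousAt hφ_cont.continuousAt hφ_top]
  refine le_iInf fun G => ?_
  rw [Function.comp_apply, hφ_mono.map_iInf_of_continuousAt hφ_cont.continuousAt hφ_top]
  exact le_iInf fun hG => lintegral_le_add_mul_of_isCoupling hG hf hfK

end Wasserstein

section FirstMoment

variable {X : Type*} [NormedAddCommGroup X] [MeasurableSpace X] [BorelSpace X]

noncomputable def firstMoment (σ : Measure X) : ℝ≥0∞ := ∫⁻ x, ‖x‖ₑ ∂σ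

variable {σ τ : Measure X} [IsProbabilityMeasure σ] [IsProbabilityMeasure τ]
  {f : X → ℝ≥0∞} {K : ℝ≥0}

lemma lintegral_le_add_mul_firstMoment (hfK : ∀ x y, f x ≤ f y + K * edist x y) :
    ∫⁻ x, f x ∂σ ≤ f 0 + K * firstMoment σ :=
  calc ∫⁻ x, f x ∂σ ≤ ∫⁻ x, f 0 + K * ‖x‖ₑ ∂σ := lintegral_mono fun x => by simpa using hfK x 0
    _ = f 0 + K * firstMoment σ := by
      rw [lintegral_add_right _ (measurable_enorm.const_mul _), lintegral_const, measure_univ,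
        mul_one, lintegral_const_mul _ measurable_enorm, firstMoment]

lemma le_lintegral_add_mul_firstMoment (hfK : ∀ x y, f x ≤ f y + K * edist x y) :
    f 0 ≤ ∫⁻ x, f x ∂τ + K * firstMoment τ :=
  calc f 0 = ∫⁻ _, f 0 ∂τ := by simp
    _ ≤ ∫⁻ x, f x + K * ‖x‖ₑ ∂τ := lintegral_mono fun x => by
      rw [← edist_zero_right, edist_comm]; exact hfK 0 x
    _ = ∫⁻ x, f x ∂τ + K * firstMoment τ := by
      rw [lintegral_add_right _ (measurable_enorm.const_mul _),
        lintegral_const_mul _ measurable_enorm, firstMoment]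

lemma lintegral_le_lintegral_add_mul_firstMoment_add
    (hfK : ∀ x y, f x ≤ f y + K * edist x y) :
    ∫⁻ x, f x ∂σ ≤ ∫⁻ x, f x ∂τ + K * (firstMoment σ + firstMoment τ) :=
  calc ∫⁻ x, f x ∂σ ≤ f 0 + K * firstMoment σ := lintegral_le_add_mul_firstMoment hfK
    _ ≤ (∫⁻ x, f x ∂τ + K * firstMoment τ) + K * firstMoment σ := by
      gcongr; exact le_lintegral_add_mul_firstMoment hfK
    _ = ∫⁻ x, f x ∂τ + K * (firstMoment σ + firstMoment τ) := by ring

lemma firstMoment_lt_top [SecondCountableTopology X]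
    (h : ∫⁻ x, ENNReal.ofReal (‖x‖ ^ 2) ∂σ < ⊤) : firstMoment σ < ⊤ := by
  refine (lintegral_enorm_le_sqrt_lintegral_enorm_sq aestronglyMeasurable_id).trans_lt ?_
  refine rpow_lt_top_of_nonneg (by norm_num) (ne_of_lt ?_)
  simpa [ENNReal.ofReal_pow, ofReal_norm] using h

end FirstMoment

section Kernel

variable {X : Type*} [NormedAddCommGroup X] [MeasurableSpace X] [BorelSpace X]
  [SecondCountableTopology X] {κ : Kernel X X} [IsMarkovKernel κ] {L : ℝ≥0}
  {f : X → ℝ≥0∞} {K : ℝ≥0}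

lemma lintegral_kernel_le_add_mul_edist
    (hκ : ∀ x y, wassersteinDist 2 (κ x) (κ y) ≤ L * edist x y)
    (hfK : ∀ x y, f x ≤ f y + K * edist x y) (x y : X) :
    ∫⁻ z, f z ∂κ x ≤ ∫⁻ z, f z ∂κ y + (K * L : ℝ≥0) * edist x y :=
  calc ∫⁻ z, f z ∂κ x ≤ ∫⁻ z, f z ∂κ y + K * wassersteinDist 2 (κ x) (κ y) :=
        lintegral_le_add_mul_wassersteinDist hfK
    _ ≤ ∫⁻ z, f z ∂κ y + K * (L * edist x y) := by gcongr; exact hκ x y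
    _ = ∫⁻ z, f z ∂κ y + (K * L : ℝ≥0) * edist x y := by rw [coe_mul, mul_assoc]

lemma lintegral_bind_le_lintegral_bind_add_mul_firstMoment_add
    (hκ : ∀ x y, wassersteinDist 2 (κ x) (κ y) ≤ L * edist x y)
    (σ τ : Measure X) [IsProbabilityMeasure σ] [IsProbabilityMeasure τ]
    (hfK : ∀ x y, f x ≤ f y + K * edist x y) :
    ∫⁻ z, f z ∂σ.bind κ ≤
      ∫⁻ z, f z ∂τ.bind κ + (K * L : ℝ≥0) * (firstMoment σ + firstMoment τ) := by
  have hf := (continuous_of_le_add_edist K coe_ne_top hfK).measurable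
  rw [Measure.lintegral_bind κ.aemeasurable hf.aemeasurable,
    Measure.lintegral_bind κ.aemeasurable hf.aemeasurable]
  exact lintegral_le_lintegral_add_mul_firstMoment_add
    (lintegral_kernel_le_add_mul_edist hκ hfK)

lemma firstMoment_bind_lt_top (hκ : ∀ x y, wassersteinDist 2 (κ x) (κ y) ≤ L * edist x y)
    {σ : Measure X} [IsProbabilityMeasure σ] (hσ : firstMoment σ < ⊤)
    (hκ₀ : firstMoment (κ 0) < ⊤) : firstMoment (σ.bind κ) < ⊤ := by
  have hnorm : ∀ x y : X, ‖x‖ₑ ≤ ‖y‖ₑ + (1 : ℝ≥0) * edist x y := fun x y => by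
    rw [coe_one, one_mul, ← edist_zero_right, ← edist_zero_right, add_comm]
    exact edist_triangle x y 0
  rw [firstMoment, Measure.lintegral_bind κ.aemeasurable measurable_enorm.aemeasurable]
  refine (lintegral_le_add_mul_firstMoment (lintegral_kernel_le_add_mul_edist hκ hnorm)).trans_lt ?_
  exact add_lt_top.2 ⟨hκ₀, mul_lt_top coe_lt_top hσ⟩

end Kernel

lemma LipschitzWith.coe_le_add_mul_edist {X : Type*} [PseudoEMetricSpace X] {f : X → ℝ≥0}
    {K : ℝ≥0} (hf : LipschitzWith K f) (x y : X) : (f x : ℝ≥0∞) ≤ f y + K * edist x y :=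
  calc (f x : ℝ≥0∞) ≤ ↑(f y + nndist (f x) (f y)) := coe_le_coe.2 (NNReal.le_add_nndist _ _)
    _ = f y + edist (f x) (f y) := by rw [coe_add, edist_nndist]
    _ ≤ f y + K * edist x y := by gcongr; exact hf x y

lemma ext_of_forall_lintegral_eq_of_le_add_mul_edist {X : Type*} [PseudoEMetricSpace X]
    [MeasurableSpace X] [BorelSpace X] {μ ν : Measure X} [IsFiniteMeasure μ]
    (h : ∀ (f : X → ℝ≥0∞) (K : ℝ≥0), (∀ x, f x ≤ 1) → (∀ x y, f x ≤ f y + K * edist x y) →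
      ∫⁻ x, f x ∂μ = ∫⁻ x, f x ∂ν) :
    μ = ν := by
  have h_univ : μ Set.univ = ν Set.univ := by
    simpa using h 1 0 (fun _ => le_rfl) (fun _ _ => by simp)
  have : IsFiniteMeasure ν := ⟨h_univ ▸ measure_lt_top μ _⟩
  -- Closed sets are detected by thickened indicators, which are bounded and Lipschitz.
  have h_closed (F : Set X) (hF : IsClosed F) : μ F = ν F := by
    have hδ (n : ℕ) : 0 < 1 / ((n : ℝ) + 1) := Nat.one_div_pos_of_nat
    refine tendsto_nhds_unique (tendsto_lintegral_thickenedIndicator_of_isClosed μ hF hδ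
      tendsto_one_div_add_atTop_nhds_zero_nat) ?_
    convert tendsto_lintegral_thickenedIndicator_of_isClosed ν hF hδ
      tendsto_one_div_add_atTop_nhds_zero_nat using 2 with n
    exact h _ _ (fun x => coe_le_one_iff.2 (thickenedIndicator_le_one _ _ x))
      (lipschitzWith_thickenedIndicator (hδ n) F).coe_le_add_mul_edist
  exact ext_of_generate_finite _ (BorelSpace.measurable_eq.trans borel_eq_generateFrom_isClosed)
    isPiSystem_isClosed h_closed h_univ

lemma tendsto_of_le_add_of_le_add {ι : Type*} {l : Filter ι} {a e : ι → ℝ≥0∞} {b : ℝ≥0∞}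
    (hb : b ≠ ⊤) (he : Tendsto e l (𝓝 0)) (hle : ∀ i, a i ≤ b + e i)
    (hge : ∀ i, b ≤ a i + e i) : Tendsto a l (𝓝 b) := by
  refine tendsto_of_tendsto_of_tendsto_of_le_of_le (g := fun i => b - e i)
    (h := fun i => b + e i) ?_ ?_ (fun i => tsub_le_iff_right.2 (hge i)) hle
  · simpa using ENNReal.Tendsto.sub tendsto_const_nhds he (Or.inl hb)
  · simpa using tendsto_const_nhds.add he

theorem tendsto_lintegral_bind_of_tendsto_wassersteinDist {X : Type*} [NormedAddCommGroup X]
    [MeasurableSpace X] [BorelSpace X] [SecondCountableTopology X] {ι : Type*} {l : Filter ι}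
    {κ : ι → Kernel X X} [∀ i, IsMarkovKernel (κ i)] {c : ι → ℝ≥0}
    (hκ : ∀ i x y, wassersteinDist 2 (κ i x) (κ i y) ≤ c i * edist x y)
    (hc : Tendsto c l (𝓝 0)) {ρ π τ : Measure X} [IsProbabilityMeasure ρ]
    [IsProbabilityMeasure π] [IsProbabilityMeasure τ]
    (hlim : Tendsto (fun i => wassersteinDist 2 (ρ.bind (κ i)) π) l (𝓝 0))
    (hρ : firstMoment ρ < ⊤) (hτ : firstMoment τ < ⊤) {f : X → ℝ≥0∞} {K : ℝ≥0}
    (hfK : ∀ x y, f x ≤ f y + K * edist x y) (hfπ : ∫⁻ x, f x ∂π ≠ ⊤) :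
    Tendsto (fun i => ∫⁻ x, f x ∂τ.bind (κ i)) l (𝓝 (∫⁻ x, f x ∂π)) := by
  set M := firstMoment τ + firstMoment ρ
  -- Compare `τ.bind (κ i)` with `π` through `ρ.bind (κ i)`.
  refine tendsto_of_le_add_of_le_add hfπ
    (e := fun i => K * wassersteinDist 2 (ρ.bind (κ i)) π + (K * c i : ℝ≥0) * M) ?_
    (fun i => ?_) (fun i => ?_)
  · have hKc : Tendsto (fun i => ((K * c i : ℝ≥0) : ℝ≥0∞)) l (𝓝 0) := by
      simpa using ENNReal.tendsto_coe.2 (hc.const_mul K)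
    simpa using (ENNReal.Tendsto.const_mul hlim (Or.inr coe_ne_top)).add
      (ENNReal.Tendsto.mul_const hKc (Or.inr (add_lt_top.2 ⟨hτ, hρ⟩).ne))
  · calc ∫⁻ x, f x ∂τ.bind (κ i)
        ≤ ∫⁻ x, f x ∂ρ.bind (κ i) + (K * c i : ℝ≥0) * M :=
          lintegral_bind_le_lintegral_bind_add_mul_firstMoment_add (hκ i) τ ρ hfK
      _ ≤ ∫⁻ x, f x ∂π + K * wassersteinDist 2 (ρ.bind (κ i)) π + (K * c i : ℝ≥0) * M := by
          gcongr; exact lintegral_le_add_mul_wassersteinDist hfK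
      _ = _ := by ring
  · calc ∫⁻ x, f x ∂π
        ≤ ∫⁻ x, f x ∂ρ.bind (κ i) + K * wassersteinDist 2 (ρ.bind (κ i)) π := by
          rw [wassersteinDist_comm]; exact lintegral_le_add_mul_wassersteinDist hfK
      _ ≤ ∫⁻ x, f x ∂τ.bind (κ i) + (K * c i : ℝ≥0) * (firstMoment ρ + firstMoment τ)
            + K * wassersteinDist 2 (ρ.bind (κ i)) π := by
          gcongr; exact lintegral_bind_le_lintegral_bind_add_mul_firstMoment_add (hκ i) ρ τ hfK
      _ = _ := by rw [add_comm (firstMoment ρ)]; ring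

theorem bind_eq_self_of_tendsto_wassersteinDist {X : Type*} [NormedAddCommGroup X]
    [MeasurableSpace X] [BorelSpace X] [SecondCountableTopology X] {ι : Type*} {l : Filter ι}
    [l.NeBot] {κ : ι → Kernel X X} [∀ i, IsMarkovKernel (κ i)] {c : ι → ℝ≥0}
    (hκ : ∀ i x y, wassersteinDist 2 (κ i x) (κ i y) ≤ c i * edist x y)
    (hc : Tendsto c l (𝓝 0)) {q : Kernel X X} [IsMarkovKernel q] {L : ℝ≥0}
    (hq : ∀ x y, wassersteinDist 2 (q x) (q y) ≤ L * edist x y) (hq₀ : firstMoment (q 0) < ⊤)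
    {ρ π : Measure X} [IsProbabilityMeasure ρ] [IsProbabilityMeasure π]
    (hcomm : ∀ i, (π.bind (κ i)).bind q = (π.bind q).bind (κ i))
    (hlim : Tendsto (fun i => wassersteinDist 2 (ρ.bind (κ i)) π) l (𝓝 0))
    (hρ : firstMoment ρ < ⊤) (hπ : firstMoment π < ⊤) :
    π.bind q = π := by
  refine ext_of_forall_lintegral_eq_of_le_add_mul_edist fun f K hf_le hfK => ?_
  have hf := (continuous_of_le_add_edist K coe_ne_top hfK).measurable
  have h_fin (μ : Measure X) [IsProbabilityMeasure μ] : ∫⁻ x, f x ∂μ ≠ ⊤ :=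
    ((lintegral_mono hf_le).trans_lt (by simp)).ne
  have h_bind (μ : Measure X) : ∫⁻ x, f x ∂μ.bind q = ∫⁻ x, ∫⁻ z, f z ∂q x ∂μ :=
    Measure.lintegral_bind q.aemeasurable hf.aemeasurable
  -- Both `∫ f d((π.bind q).bind (κ i))` and `∫ (∫ f dq) d(π.bind (κ i))` converge, and they agree.
  have h_lim_f := tendsto_lintegral_bind_of_tendsto_wassersteinDist hκ hc hlim hρ
    (firstMoment_bind_lt_top hq hπ hq₀) hfK (h_fin π)
  have h_lim_qf := tendsto_lintegral_bind_of_tendsto_wassersteinDist hκ hc hlim hρ hπ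
    (lintegral_kernel_le_add_mul_edist hq hfK) (h_bind π ▸ h_fin _)
  rw [← h_bind] at h_lim_qf
  refine tendsto_nhds_unique (h_lim_qf.congr fun i => ?_) h_lim_f
  rw [← h_bind, hcomm]

theorem stmt13_general {H : Type*} [NormedAddCommGroup H]
    [SecondCountableTopology H] [MeasurableSpace H] [BorelSpace H]
    (ε : ℝ) (hε : 0 < ε) (p : ℝ → Kernel H H)
    (hMarkov : ∀ t > (0 : ℝ), IsMarkovKernel (p t))
    (hCK : ∀ s > (0 : ℝ), ∀ t > (0 : ℝ), ∀ ρ : Measure H, IsProbabilityMeasure ρ →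
      ρ.bind (fun x => p (s + t) x) = (ρ.bind (fun x => p s x)).bind (fun x => p t x))
    (hmom : ∀ t > (0 : ℝ), ∀ x : H, ∫⁻ y, ENNReal.ofReal (‖y‖ ^ 2) ∂(p t x) < ∞)
    (hcontr : ∀ t > (0 : ℝ), ∀ x y : H, wassersteinDist 2 (p t x) (p t y) ≤
      ENNReal.ofReal (Real.exp (-ε * t / 2) * ‖x - y‖))
    (ρ π : Measure H) [IsProbabilityMeasure ρ] [IsProbabilityMeasure π]
    (hρ : ∫⁻ x, ENNReal.ofReal (‖x‖ ^ 2) ∂ρ < ∞)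
    (hπ : ∫⁻ x, ENNReal.ofReal (‖x‖ ^ 2) ∂π < ∞)
    (hlim : Filter.Tendsto
      (fun k : ℕ => wassersteinDist 2 (ρ.bind (fun x => p (k : ℝ) x)) π)
      Filter.atTop (nhds 0)) :
    ∀ t > (0 : ℝ), π.bind (fun x => p t x) = π := by
  intro t ht
  have := hMarkov t ht
  -- `p 0` need not be Markov, so the sequence `p k` is shifted to start at `k = 1`.
  have hpos (n : ℕ) : (0 : ℝ) < (n + 1 : ℕ) := by positivity
  have (n : ℕ) : IsMarkovKernel (p (n + 1 : ℕ)) := hMarkov _ (hpos n)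
  set c : ℝ → ℝ≥0 := fun s => (Real.exp (-ε * s / 2)).toNNReal
  have hc (s : ℝ) (hs : 0 < s) (x y : H) : wassersteinDist 2 (p s x) (p s y) ≤ c s * edist x y := by
    rw [edist_eq_enorm_sub, ← ofReal_norm]
    exact (hcontr s hs x y).trans_eq (ENNReal.ofReal_mul (Real.exp_pos _).le)
  have hc_lim : Tendsto (fun n : ℕ => c (n + 1 : ℕ)) atTop (𝓝 0) := by
    have h : Tendsto (fun n : ℕ => ε * ((n + 1 : ℕ) : ℝ) / 2) atTop atTop :=
      ((tendsto_natCast_atTop_atTop.comp (tendsto_add_atTop_nat 1)).const_mul_atTop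
        hε).atTop_div_const two_pos
    simpa [c, neg_mul, neg_div, Function.comp_def] using
      (continuous_real_toNNReal.tendsto 0).comp (Real.tendsto_exp_neg_atTop_nhds_zero.comp h)
  refine bind_eq_self_of_tendsto_wassersteinDist (κ := fun n : ℕ => p (n + 1 : ℕ))
    (fun n => hc _ (hpos n)) hc_lim (hc t ht) (firstMoment_lt_top (hmom t ht 0)) (fun n => ?_)
    ((tendsto_add_atTop_iff_nat 1).2 hlim) (firstMoment_lt_top hρ) (firstMoment_lt_top hπ)
  rw [← hCK _ (hpos n) t ht π inferInstance, add_comm, hCK t ht _ (hpos n) π inferInstance]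

/-- Under the Chapman–Kolmogorov relation, finite second moments of the
kernels, and the Wasserstein contraction, if `W₂(p_k*ρ, π) → 0` along the natural numbers
for some probability measures `ρ, π` with finite second moments, then `π` is invariant:
`p_t*π = π` for every `t > 0`. -/
theorem stmt13 {H : Type*} [NormedAddCommGroup H] [InnerProductSpace ℝ H] [CompleteSpace H]
    [SecondCountableTopology H] [MeasurableSpace H] [BorelSpace H]
    (ε : ℝ) (hε : 0 < ε) (p : ℝ → Kernel H H)
    (hMarkov : ∀ t > (0 : ℝ), IsMarkovKernel (p t))
    (hCK : ∀ s > (0 : ℝ), ∀ t > (0 : ℝ), ∀ ρ : Measure H, IsProbabilityMeasure ρ →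
      ρ.bind (fun x => p (s + t) x) = (ρ.bind (fun x => p s x)).bind (fun x => p t x))
    (hmom : ∀ t > (0 : ℝ), ∀ x : H, ∫⁻ y, ENNReal.ofReal (‖y‖ ^ 2) ∂(p t x) < ∞)
    (hcontr : ∀ t > (0 : ℝ), ∀ x y : H, wassersteinDist 2 (p t x) (p t y) ≤
      ENNReal.ofReal (Real.exp (-ε * t / 2) * ‖x - y‖))
    (ρ π : Measure H) [IsProbabilityMeasure ρ] [IsProbabilityMeasure π]
    (hρ : ∫⁻ x, ENNReal.ofReal (‖x‖ ^ 2) ∂ρ < ∞)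
    (hπ : ∫⁻ x, ENNReal.ofReal (‖x‖ ^ 2) ∂π < ∞)
    (hlim : Filter.Tendsto
      (fun k : ℕ => wassersteinDist 2 (ρ.bind (fun x => p (k : ℝ) x)) π)
      Filter.atTop (nhds 0)) :
    ∀ t > (0 : ℝ), π.bind (fun x => p t x) = π :=
  stmt13_general ε hε p hMarkov hCK hmom hcontr ρ π hρ hπ hlim
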